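/- arXiv:2007.01233 — 7 statements merged into one kernel-verified Lean document; each statement's English description precedes it below -/
import Mathlib

section
/- Let σ, σ̃ be distinct letters from AP \ {wht, shdw}, and let w be a shadowy word in which only even (white) positions may contain σ and only odd (shadow) positions may contain σ̃. Then the following are equivalent: (i) for every even position p with p+1 < |w|: σ ∈ w_p iff σ̃ ∈ w_{p+1}; (ii) for every even position p of w, |{j < p : wht ∈ w_j and σ ∈ w_j}| = |{j < p : shdw ∈ w_j and σ̃ ∈ w_j}|, and moreover for the last even position p = |w|−2 it holds that σ ∈ w_p iff σ̃ ∈ w_{p+1}. -/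
/-!
On a shadowy word the letter `wht` marks exactly the even positions and `shdw` exactly the odd
ones, so the two counts in (♥) below position `2k` are the numbers of `i < k` with `σ ∈ w_{2i}`
and with `σ̃ ∈ w_{2i+1}` respectively. Two counting functions agree up to `n` exactly when the
counted predicates agree below `n`, because each count grows by the indicator of the predicate.
(♥) only compares the counts up to the last even position, which misses the last pair; (♦)
supplies it.
-/

namespace Transfer8

abbrev Word := List (Set ℕ)

/-- A word is shadowy: even length, even positions carry `wht` and not `shdw`,
odd positions carry `shdw` and not `wht`. -/
def Shadowy (wht shdw : ℕ) (w : Word) : Prop :=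
  Even w.length ∧
  (∀ j < w.length, Even j → wht ∈ w.getD j ∅ ∧ shdw ∉ w.getD j ∅) ∧
  (∀ j < w.length, Odd j → shdw ∈ w.getD j ∅ ∧ wht ∉ w.getD j ∅)

section Count

variable (P Q : ℕ → Prop) [DecidablePred P] [DecidablePred Q]

theorem ncard_setOf_lt_and (n : ℕ) : {j | j < n ∧ P j}.ncard = Nat.count P n := by
  rw [Nat.count_eq_card_filter_range, ← Set.ncard_coe_finset]
  congr 1
  ext j
  simp

theorem count_even_and_two_mul (k : ℕ) :
    Nat.count (fun j => Even j ∧ P j) (2 * k) = Nat.count (fun i => P (2 * i)) k := by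
  induction k with
  | zero => simp
  | succ k ih =>
    rw [Nat.mul_succ, Nat.count_succ, Nat.count_succ, Nat.count_succ, ih]
    simp [parity_simps]

theorem count_odd_and_two_mul (k : ℕ) :
    Nat.count (fun j => Odd j ∧ P j) (2 * k) = Nat.count (fun i => P (2 * i + 1)) k := by
  induction k with
  | zero => simp
  | succ k ih =>
    rw [Nat.mul_succ, Nat.count_succ, Nat.count_succ, Nat.count_succ, ih]
    simp [parity_simps]

theorem forall_le_count_eq_iff {n : ℕ} :
    (∀ k ≤ n, Nat.count P k = Nat.count Q k) ↔ ∀ i < n, (P i ↔ Q i) := by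
  constructor
  · intro hcount i hi
    have hsucc := hcount (i + 1) hi
    rw [Nat.count_succ, Nat.count_succ, hcount i hi.le] at hsucc
    by_cases hP : P i <;> by_cases hQ : Q i <;> simp_all
  · intro hiff k hk
    induction k with
    | zero => simp
    | succ k ih => rw [Nat.count_succ, Nat.count_succ, ih (by omega), if_congr (hiff k hk) rfl rfl]

theorem forall_lt_iff_count_eq_and_last {n : ℕ} :
    (∀ i < n, (P i ↔ Q i)) ↔
      (∀ k < n, Nat.count P k = Nat.count Q k) ∧ (0 < n → (P (n - 1) ↔ Q (n - 1))) := by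
  cases n with
  | zero => simp
  | succ m =>
    rw [Nat.forall_lt_succ_right, Nat.add_sub_cancel]
    simp only [Nat.lt_succ_iff, forall_le_count_eq_iff, Nat.zero_le, forall_const]

end Count

namespace Shadowy

variable {wht shdw : ℕ} {w : Word}

theorem wht_mem_iff (hw : Shadowy wht shdw w) {j : ℕ} (hj : j < w.length) :
    wht ∈ w.getD j ∅ ↔ Even j := by
  rcases Nat.even_or_odd j with hj' | hj'
  · exact iff_of_true (hw.2.1 j hj hj').1 hj'
  · exact iff_of_false (hw.2.2 j hj hj').2 (Nat.not_even_iff_odd.2 hj')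

theorem shdw_mem_iff (hw : Shadowy wht shdw w) {j : ℕ} (hj : j < w.length) :
    shdw ∈ w.getD j ∅ ↔ Odd j := by
  rcases Nat.even_or_odd j with hj' | hj'
  · exact iff_of_false (hw.2.1 j hj hj').2 (Nat.not_odd_iff_even.2 hj')
  · exact iff_of_true (hw.2.2 j hj hj').1 hj'

theorem ncard_wht_and (hw : Shadowy wht shdw w) (P : ℕ → Prop) [DecidablePred P] {k : ℕ}
    (hk : 2 * k ≤ w.length) :
    {j | j < 2 * k ∧ wht ∈ w.getD j ∅ ∧ P j}.ncard = Nat.count (fun i => P (2 * i)) k := by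
  rw [← count_even_and_two_mul, ← ncard_setOf_lt_and]
  congr 1
  ext j
  simp only [Set.mem_ofPred_eq, and_congr_right_iff]
  intro hj
  rw [hw.wht_mem_iff (by omega)]

theorem ncard_shdw_and (hw : Shadowy wht shdw w) (P : ℕ → Prop) [DecidablePred P] {k : ℕ}
    (hk : 2 * k ≤ w.length) :
    {j | j < 2 * k ∧ shdw ∈ w.getD j ∅ ∧ P j}.ncard = Nat.count (fun i => P (2 * i + 1)) k := by
  rw [← count_odd_and_two_mul, ← ncard_setOf_lt_and]
  congr 1
  ext j
  simp only [Set.mem_ofPred_eq, and_congr_right_iff]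
  intro hj
  rw [hw.shdw_mem_iff (by omega)]

end Shadowy

theorem forall_even_iff {q : ℕ → Prop} : (∀ p, Even p → q p) ↔ ∀ i, q (2 * i) :=
  ⟨fun h i => h _ (even_two_mul i), fun h _ ⟨i, hi⟩ => hi ▸ two_mul i ▸ h i⟩

theorem transfer_characterisation_general
    (wht shdw σ σt : ℕ)
    (w : Word) (hsh : Shadowy wht shdw w) :
    -- (i)  every even position transfers σ to σ̃ at its successor
    (∀ p, Even p → p + 1 < w.length →
        (σ ∈ w.getD p ∅ ↔ σt ∈ w.getD (p + 1) ∅)) ↔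
    -- (ii) the equicardinality (♥) at every even position, together with (♦)
    ((∀ p, Even p → p < w.length →
        Set.ncard {j | j < p ∧ wht ∈ w.getD j ∅ ∧ σ ∈ w.getD j ∅} =
        Set.ncard {j | j < p ∧ shdw ∈ w.getD j ∅ ∧ σt ∈ w.getD j ∅}) ∧
      (2 ≤ w.length →
        (σ ∈ w.getD (w.length - 2) ∅ ↔ σt ∈ w.getD (w.length - 1) ∅))) := by
  classical
  obtain ⟨n, hn⟩ := hsh.1.two_dvd
  have transfer : (∀ p, Even p → p + 1 < w.length → (σ ∈ w.getD p ∅ ↔ σt ∈ w.getD (p + 1) ∅)) ↔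
      ∀ i < n, (σ ∈ w.getD (2 * i) ∅ ↔ σt ∈ w.getD (2 * i + 1) ∅) := by
    rw [forall_even_iff]
    refine forall_congr' fun i => imp_congr_left ?_
    omega
  have heart : (∀ p, Even p → p < w.length →
      Set.ncard {j | j < p ∧ wht ∈ w.getD j ∅ ∧ σ ∈ w.getD j ∅} =
      Set.ncard {j | j < p ∧ shdw ∈ w.getD j ∅ ∧ σt ∈ w.getD j ∅}) ↔
      ∀ k < n, Nat.count (fun i => σ ∈ w.getD (2 * i) ∅) k =
        Nat.count (fun i => σt ∈ w.getD (2 * i + 1) ∅) k := by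
    rw [forall_even_iff]
    refine forall_congr' fun k => ?_
    rw [hn, Nat.mul_lt_mul_left two_pos]
    refine imp_congr_right fun hk => ?_
    rw [hsh.ncard_wht_and _ (by omega), hsh.ncard_shdw_and _ (by omega)]
  have diamond : (2 ≤ w.length → (σ ∈ w.getD (w.length - 2) ∅ ↔ σt ∈ w.getD (w.length - 1) ∅)) ↔
      (0 < n → (σ ∈ w.getD (2 * (n - 1)) ∅ ↔ σt ∈ w.getD (2 * (n - 1) + 1) ∅)) := by
    rw [hn]
    refine imp_congr_ctx (by omega) fun hn => ?_
    rw [show 2 * n - 2 = 2 * (n - 1) by omega, show 2 * n - 1 = 2 * (n - 1) + 1 by omega]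
  rw [transfer, heart, diamond]
  exact forall_lt_iff_count_eq_and_last _ _

theorem transfer_characterisation
    (wht shdw σ σt : ℕ)
    (hws : wht ≠ shdw) (hσσt : σ ≠ σt)
    (hσw : σ ≠ wht) (hσs : σ ≠ shdw) (hσtw : σt ≠ wht) (hσts : σt ≠ shdw)
    (w : Word) (hw : w ≠ []) (hsh : Shadowy wht shdw w)
    (honlyσ : ∀ j < w.length, σ ∈ w.getD j ∅ → Even j)
    (honlyσt : ∀ j < w.length, σt ∈ w.getD j ∅ → Odd j) :
    -- (i)  every even position transfers σ to σ̃ at its successor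
    (∀ p, Even p → p + 1 < w.length →
        (σ ∈ w.getD p ∅ ↔ σt ∈ w.getD (p + 1) ∅)) ↔
    -- (ii) the equicardinality (♥) at every even position, together with (♦)
    ((∀ p, Even p → p < w.length →
        Set.ncard {j | j < p ∧ wht ∈ w.getD j ∅ ∧ σ ∈ w.getD j ∅} =
        Set.ncard {j | j < p ∧ shdw ∈ w.getD j ∅ ∧ σt ∈ w.getD j ∅}) ∧
      (2 ≤ w.length →
        (σ ∈ w.getD (w.length - 2) ∅ ↔ σt ∈ w.getD (w.length - 1) ∅))) :=
  transfer_characterisation_general wht shdw σ σt w hsh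
end Transfer8
end

section
/- Let σ, σ̃ be distinct letters from AP \ {wht, shdw}. Let φ_last := G(shdw), φ_stl := wht ∧ G(wht ∨ φ_last), and define φ_transfer^{σ,σ̃} := ψ_shadowy ∧ G(σ → wht) ∧ G(σ̃ → shdw) ∧ G(wht → Half([wht ∧ σ] ∨ [shdw ∧ ¬σ̃])) ∧ (F(φ_stl ∧ σ) ↔ F(φ_last ∧ σ̃)), where ψ_shadowy is the LTL_F+Half formula defining shadowy words. Then for every finite word w: w,0 ⊨ φ_transfer^{σ,σ̃} if and only if (1) w is shadowy, (2) only even (white) positions of w contain σ and only odd (shadow) positions contain σ̃, and (3) for every even position p with p+1 < |w|: σ ∈ w_p iff σ̃ ∈ w_{p+1}. -/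
/- STATEMENT 9: The LTL_F+Half formula φ_transfer^{σ,σ̃} characterises the transfer
of σ from white positions to σ̃ on their shadows. -/

namespace Transfer9

abbrev Word := List (Set ℕ)

inductive Formula where
  | atom (a : ℕ)
  | neg (φ : Formula)
  | conj (φ ψ : Formula)
  | fut (φ : Formula)
  | half (φ : Formula)

def Sat (w : Word) : ℕ → Formula → Prop
  | i, .atom a => a ∈ w.getD i ∅
  | i, .neg φ => ¬ Sat w i φ
  | i, .conj φ ψ => Sat w i φ ∧ Sat w i ψ
  | i, .fut φ => ∃ j, i ≤ j ∧ j < w.length ∧ Sat w j φ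
  | i, .half φ => 2 * Set.ncard {j | j < i ∧ Sat w j φ} = i

def fdisj (φ ψ : Formula) : Formula := .neg (.conj (.neg φ) (.neg ψ))
def fimpl (φ ψ : Formula) : Formula := fdisj (.neg φ) ψ
def fiff (φ ψ : Formula) : Formula := .conj (fimpl φ ψ) (fimpl ψ φ)
def G (φ : Formula) : Formula := .neg (.fut (.neg φ))

def φinit (wht shdw : ℕ) : Formula :=
  .conj (.atom wht)
    (.conj (G (fiff (.atom wht) (.neg (.atom shdw))))
           (G (fimpl (.atom wht) (.fut (.atom shdw)))))

/-- `ψ_shadowy`, the formula defining shadowy words. -/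
def ψshadowy (wht shdw : ℕ) : Formula :=
  .conj (φinit wht shdw) (G (fiff (.half (.atom wht)) (.atom wht)))

/-- `φ_last := G(shdw)`. -/
def φlast (shdw : ℕ) : Formula := G (.atom shdw)

/-- `φ_stl := wht ∧ G(wht ∨ φ_last)`. -/
def φstl (wht shdw : ℕ) : Formula := .conj (.atom wht) (G (fdisj (.atom wht) (φlast shdw)))

/-- `φ_transfer^{σ,σ̃}`. -/
def φtransfer (wht shdw σ σt : ℕ) : Formula :=
  .conj (ψshadowy wht shdw)
    (.conj (G (fimpl (.atom σ) (.atom wht)))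
      (.conj (G (fimpl (.atom σt) (.atom shdw)))
        (.conj (G (fimpl (.atom wht)
                    (.half (fdisj (.conj (.atom wht) (.atom σ))
                                  (.conj (.atom shdw) (.neg (.atom σt)))))))
               (fiff (.fut (.conj (φstl wht shdw) (.atom σ)))
                     (.fut (.conj (φlast shdw) (.atom σt)))))))

def Shadowy (wht shdw : ℕ) (w : Word) : Prop :=
  Even w.length ∧
  (∀ j < w.length, Even j → wht ∈ w.getD j ∅ ∧ shdw ∉ w.getD j ∅) ∧
  (∀ j < w.length, Odd j → shdw ∈ w.getD j ∅ ∧ wht ∉ w.getD j ∅)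

/-! On a word in which `wht` holds exactly at the even positions, `Half ψ` at an even position
`2t` says that `ψ` holds at exactly `t` of the positions `0, …, 2t - 1`. This holds at every even
position below `|w|` iff `ψ` holds at exactly one position of each pair `(p, p + 1)` with `p` even
and `p + 2 < |w|`: compare `Half ψ` at `p` and at `p + 2`. For `ψ = [wht ∧ σ] ∨ [shdw ∧ ¬σ̃]`,
"exactly one" is the transfer condition `σ ∈ w_p ↔ σ̃ ∈ w_{p+1}`. The last pair is out of reach of
`Half`; it is handled by the final biconditional, since `φ_stl` and `φ_last` hold exactly at
positions `|w| - 2` and `|w| - 1`. The same counting shows that `G(Half wht ↔ wht)` forces `wht`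
to hold exactly at the even positions, which is the heart of `ψ_shadowy`. -/

lemma two_mul_succ_div_two_eq_iff {m : ℕ} : 2 * ((m + 1) / 2) = m ↔ Even m := by
  rw [Nat.even_iff]; omega

lemma forall_even_add_one_lt_iff {n : ℕ} (hn : Even n) (hn0 : 0 < n) {P : ℕ → Prop} :
    ((∀ p, Even p → p + 2 < n → P p) ∧ P (n - 2)) ↔ ∀ p, Even p → p + 1 < n → P p := by
  rw [Nat.even_iff] at hn
  constructor
  · rintro ⟨h, hlast⟩ p hp hpn
    rcases (by rw [Nat.even_iff] at hp; omega : p + 2 < n ∨ p = n - 2) with hpn | rfl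
    exacts [h p hp hpn, hlast]
  · intro h
    exact ⟨fun p hp hpn => h p hp (by omega), h _ (Nat.even_iff.2 (by omega)) (by omega)⟩

section Semantics

variable {w : Word} {i : ℕ} {a : ℕ} {φ ψ : Formula}

lemma sat_atom : Sat w i (.atom a) ↔ a ∈ w.getD i ∅ := Iff.rfl
lemma sat_neg : Sat w i (.neg φ) ↔ ¬ Sat w i φ := Iff.rfl
lemma sat_conj : Sat w i (.conj φ ψ) ↔ Sat w i φ ∧ Sat w i ψ := Iff.rfl
lemma sat_fut : Sat w i (.fut φ) ↔ ∃ j, i ≤ j ∧ j < w.length ∧ Sat w j φ := Iff.rfl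

lemma sat_fdisj : Sat w i (fdisj φ ψ) ↔ Sat w i φ ∨ Sat w i ψ := by
  simp only [fdisj, sat_neg, sat_conj]; tauto

lemma sat_fimpl : Sat w i (fimpl φ ψ) ↔ (Sat w i φ → Sat w i ψ) := by
  simp only [fimpl, sat_fdisj, sat_neg]; tauto

lemma sat_fiff : Sat w i (fiff φ ψ) ↔ (Sat w i φ ↔ Sat w i ψ) := by
  simp only [fiff, sat_conj, sat_fimpl]; tauto

lemma sat_G : Sat w i (G φ) ↔ ∀ j, i ≤ j → j < w.length → Sat w j φ := by
  simp only [G, sat_neg, sat_fut, not_exists, not_and, not_not]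

lemma sat_fut_conj_atom_iff_of_unique {k : ℕ} (hk : k < w.length)
    (hψ : ∀ i < w.length, Sat w i ψ ↔ i = k) :
    Sat w 0 (.fut (.conj ψ (.atom a))) ↔ a ∈ w.getD k ∅ := by
  simp only [sat_fut, sat_conj, sat_atom]
  constructor
  · rintro ⟨i, -, hi, hψi, ha⟩
    rwa [(hψ i hi).1 hψi] at ha
  · exact fun ha => ⟨k, k.zero_le, hk, (hψ k hk).2 rfl, ha⟩

end Semantics

section Counting

variable {w : Word} {i : ℕ} {φ : Formula}

noncomputable def satCount (w : Word) (φ : Formula) (i : ℕ) : ℕ :=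
  {j | j < i ∧ Sat w j φ}.ncard

lemma sat_half : Sat w i (.half φ) ↔ 2 * satCount w φ i = i := Iff.rfl

lemma satCount_zero : satCount w φ 0 = 0 := by
  simp [satCount]

open Classical in
lemma satCount_succ : satCount w φ (i + 1) = satCount w φ i + if Sat w i φ then 1 else 0 := by
  have hfin : {j | j < i ∧ Sat w j φ}.Finite := (Set.finite_lt_nat i).subset fun j hj => hj.1
  split_ifs with h
  · have : {j | j < i + 1 ∧ Sat w j φ} = insert i {j | j < i ∧ Sat w j φ} := by
      ext j; simp only [Set.mem_ofPred_eq, Set.mem_insert_iff]; grind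
    rw [satCount, this, Set.ncard_insert_of_notMem (by simp) hfin, satCount]
  · have : {j | j < i + 1 ∧ Sat w j φ} = {j | j < i ∧ Sat w j φ} := by
      ext j; simp only [Set.mem_ofPred_eq]; grind
    rw [satCount, this, satCount, add_zero]

variable {n : ℕ}

open Classical in
lemma satCount_eq_of_sat_iff_even (h : ∀ j < n, Sat w j φ ↔ Even j) :
    ∀ j ≤ n, satCount w φ j = (j + 1) / 2 := by
  intro j hj
  induction j with
  | zero => exact satCount_zero
  | succ j ih =>
    rw [satCount_succ, ih (by omega), if_congr (h j (by omega)) rfl rfl]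
    split_ifs with he <;> simp only [Nat.even_iff] at he <;> omega

lemma forall_sat_half_iff_sat_iff :
    (∀ j < n, (Sat w j (.half φ) ↔ Sat w j φ)) ↔ ∀ j < n, (Sat w j φ ↔ Even j) := by
  constructor
  · intro h
    suffices ∀ m ≤ n, ∀ j < m, (Sat w j φ ↔ Even j) from this n le_rfl
    intro m
    induction m with
    | zero => intro _ j hj; omega
    | succ m ih =>
      intro hm j hj
      rcases Nat.lt_succ_iff_lt_or_eq.mp hj with hj | rfl
      · exact ih (by omega) j hj
      · rw [← h j hm, sat_half, satCount_eq_of_sat_iff_even (ih (by omega)) j le_rfl,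
          two_mul_succ_div_two_eq_iff]
  · intro h j hj
    rw [sat_half, satCount_eq_of_sat_iff_even h j hj.le, two_mul_succ_div_two_eq_iff, h j hj]

open Classical in
lemma satCount_add_two : satCount w φ (i + 2) =
    satCount w φ i + ((if Sat w i φ then 1 else 0) + if Sat w (i + 1) φ then 1 else 0) := by
  rw [satCount_succ, satCount_succ, add_assoc]

lemma forall_even_sat_half_iff :
    (∀ j < n, Even j → Sat w j (.half φ)) ↔
      ∀ p, Even p → p + 2 < n → Xor (Sat w p φ) (Sat w (p + 1) φ) := by
  simp only [sat_half]
  constructor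
  · intro h p hp hpn
    have hp0 := h p (by omega) hp
    have hp2 := h (p + 2) hpn (hp.add even_two)
    rw [satCount_add_two] at hp2
    by_cases h0 : Sat w p φ <;> by_cases h1 : Sat w (p + 1) φ <;> simp [h0, h1] at hp2 ⊢ <;> omega
  · rintro h _ hj ⟨t, rfl⟩
    induction t with
    | zero => simp [satCount_zero]
    | succ t ih =>
      have hx := h (t + t) ⟨t, rfl⟩ (by omega)
      rw [show t + 1 + (t + 1) = t + t + 2 by ring, satCount_add_two]
      rcases hx with ⟨h0, h1⟩ | ⟨h0, h1⟩ <;> simp [h0, h1] <;> omega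

end Counting

section Shadowy

variable {wht shdw : ℕ} {w : Word}

lemma shadowy_iff : Shadowy wht shdw w ↔ Even w.length ∧
    (∀ j < w.length, (wht ∈ w.getD j ∅ ↔ Even j)) ∧ ∀ j < w.length, (shdw ∈ w.getD j ∅ ↔ Odd j) := by
  simp only [Shadowy, ← Nat.not_even_iff_odd]
  grind

namespace Shadowy

variable (hs : Shadowy wht shdw w) {j : ℕ} (hj : j < w.length)
include hs hj

lemma wht_mem_iff : wht ∈ w.getD j ∅ ↔ Even j := (shadowy_iff.1 hs).2.1 j hj

lemma shdw_mem_iff : shdw ∈ w.getD j ∅ ↔ Odd j := (shadowy_iff.1 hs).2.2 j hj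

end Shadowy

lemma sat_ψshadowy (hw : w ≠ []) : Sat w 0 (ψshadowy wht shdw) ↔ Shadowy wht shdw w := by
  have hn : 0 < w.length := List.length_pos_iff.2 hw
  simp only [ψshadowy, φinit, sat_conj, sat_G, sat_fiff, sat_fimpl, sat_neg, sat_fut,
    Nat.zero_le, true_imp_iff]
  rw [forall_sat_half_iff_sat_iff, shadowy_iff]
  simp only [sat_atom]
  constructor
  · rintro ⟨⟨-, hcompl, hfut⟩, hwht⟩
    have hshdw : ∀ j < w.length, (shdw ∈ w.getD j ∅ ↔ Odd j) := fun j hj => by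
      rw [← Nat.not_even_iff_odd, ← hwht j hj, hcompl j hj, not_not]
    refine ⟨?_, hwht, hshdw⟩
    by_contra hodd
    have hlast : Even (w.length - 1) := by rw [Nat.even_iff] at hodd ⊢; omega
    -- the last position would be white, with no shadow after it
    obtain ⟨k, hk, hkn, hks⟩ := hfut _ (by omega) ((hwht _ (by omega)).2 hlast)
    have hk_odd := (hshdw k hkn).1 hks
    rw [Nat.odd_iff] at hk_odd
    rw [Nat.even_iff] at hodd
    omega
  · rintro ⟨heven, hwht, hshdw⟩
    refine ⟨⟨(hwht 0 hn).2 Even.zero, fun j hj => ?_, fun j hj hj' => ?_⟩, hwht⟩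
    · rw [hwht j hj, hshdw j hj, Nat.not_odd_iff_even]
    · have he := (hwht j hj).1 hj'
      have hj1 : j + 1 < w.length := by rw [Nat.even_iff] at he heven; omega
      exact ⟨j + 1, by omega, hj1, (hshdw _ hj1).2 he.add_one⟩

end Shadowy

abbrev transferMark (wht shdw σ σt : ℕ) : Formula :=
  fdisj (.conj (.atom wht) (.atom σ)) (.conj (.atom shdw) (.neg (.atom σt)))

namespace Shadowy

variable {wht shdw : ℕ} {w : Word} (hs : Shadowy wht shdw w)
include hs

lemma sat_φlast_iff {i : ℕ} (hi : i < w.length) : Sat w i (φlast shdw) ↔ i = w.length - 1 := by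
  simp only [φlast, sat_G, sat_atom]
  constructor
  · intro h
    have hi_odd := (hs.shdw_mem_iff hi).1 (h i le_rfl hi)
    by_contra hne
    have hi1_odd := (hs.shdw_mem_iff (j := i + 1) (by omega)).1 (h (i + 1) (by omega) (by omega))
    rw [Nat.odd_iff] at hi_odd hi1_odd
    omega
  · rintro rfl j hj hjn
    have heven := hs.1
    rw [hs.shdw_mem_iff hjn, Nat.odd_iff]
    rw [Nat.even_iff] at heven
    omega

lemma sat_φstl_iff {i : ℕ} (hi : i < w.length) : Sat w i (φstl wht shdw) ↔ i = w.length - 2 := by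
  have heven := Nat.even_iff.1 hs.1
  simp only [φstl, sat_conj, sat_G, sat_fdisj, sat_atom]
  constructor
  · rintro ⟨hwi, h⟩
    have hi_even := Nat.even_iff.1 ((hs.wht_mem_iff hi).1 hwi)
    by_contra hne
    -- position i + 1 is a shadow, but not the last position
    have hi1 : i + 1 < w.length := by omega
    rcases h (i + 1) (by omega) hi1 with hw1 | hl1
    · rw [hs.wht_mem_iff hi1, Nat.even_iff] at hw1
      omega
    · rw [hs.sat_φlast_iff hi1] at hl1
      omega
  · rintro rfl
    refine ⟨(hs.wht_mem_iff hi).2 (Nat.even_iff.2 (by omega)), fun j hj hjn => ?_⟩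
    rcases (by omega : j = w.length - 2 ∨ j = w.length - 1) with rfl | rfl
    · exact Or.inl ((hs.wht_mem_iff hjn).2 (Nat.even_iff.2 (by omega)))
    · exact Or.inr ((hs.sat_φlast_iff hjn).2 rfl)

lemma sat_fut_φstl_conj_iff (hn : 0 < w.length) (a : ℕ) :
    Sat w 0 (.fut (.conj (φstl wht shdw) (.atom a))) ↔ a ∈ w.getD (w.length - 2) ∅ :=
  sat_fut_conj_atom_iff_of_unique (by omega) fun _ => hs.sat_φstl_iff

lemma sat_fut_φlast_conj_iff (hn : 0 < w.length) (a : ℕ) :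
    Sat w 0 (.fut (.conj (φlast shdw) (.atom a))) ↔ a ∈ w.getD (w.length - 1) ∅ :=
  sat_fut_conj_atom_iff_of_unique (by omega) fun _ => hs.sat_φlast_iff

lemma sat_G_imp_wht_iff (a : ℕ) : Sat w 0 (G (fimpl (.atom a) (.atom wht))) ↔
    ∀ j < w.length, a ∈ w.getD j ∅ → Even j := by
  simp only [sat_G, sat_fimpl, sat_atom, Nat.zero_le, true_imp_iff]
  exact forall₂_congr fun j hj => by rw [hs.wht_mem_iff hj]

lemma sat_G_imp_shdw_iff (a : ℕ) : Sat w 0 (G (fimpl (.atom a) (.atom shdw))) ↔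
    ∀ j < w.length, a ∈ w.getD j ∅ → Odd j := by
  simp only [sat_G, sat_fimpl, sat_atom, Nat.zero_le, true_imp_iff]
  exact forall₂_congr fun j hj => by rw [hs.shdw_mem_iff hj]

variable (σ σt : ℕ)

lemma sat_transferMark_of_even {j : ℕ} (hj : j < w.length) (he : Even j) :
    Sat w j (transferMark wht shdw σ σt) ↔ σ ∈ w.getD j ∅ := by
  simp only [transferMark, sat_fdisj, sat_conj, sat_neg, sat_atom, hs.wht_mem_iff hj,
    hs.shdw_mem_iff hj]
  simp [he]

lemma sat_transferMark_of_odd {j : ℕ} (hj : j < w.length) (ho : Odd j) :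
    Sat w j (transferMark wht shdw σ σt) ↔ σt ∉ w.getD j ∅ := by
  simp only [transferMark, sat_fdisj, sat_conj, sat_neg, sat_atom, hs.wht_mem_iff hj,
    hs.shdw_mem_iff hj]
  simp [ho]

lemma sat_G_wht_imp_half_iff :
    Sat w 0 (G (fimpl (.atom wht) (.half (transferMark wht shdw σ σt)))) ↔
    ∀ p, Even p → p + 2 < w.length → (σ ∈ w.getD p ∅ ↔ σt ∈ w.getD (p + 1) ∅) := by
  simp only [sat_G, sat_fimpl, Nat.zero_le, true_imp_iff]
  rw [forall₂_congr fun j hj => by rw [sat_atom, hs.wht_mem_iff hj], forall_even_sat_half_iff]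
  refine forall₃_congr fun p hp hpn => ?_
  rw [hs.sat_transferMark_of_even σ σt (by omega) hp,
    hs.sat_transferMark_of_odd σ σt (by omega) hp.add_one, xor_iff_iff_not, not_not]

end Shadowy

theorem φtransfer_correct_general
    (wht shdw σ σt : ℕ)
    (w : Word) (hw : w ≠ []) :
    Sat w 0 (φtransfer wht shdw σ σt) ↔
      (Shadowy wht shdw w ∧
       (∀ j < w.length, σ ∈ w.getD j ∅ → Even j) ∧
       (∀ j < w.length, σt ∈ w.getD j ∅ → Odd j) ∧
       (∀ p, Even p → p + 1 < w.length →
          (σ ∈ w.getD p ∅ ↔ σt ∈ w.getD (p + 1) ∅))) := by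
  have hn : 0 < w.length := List.length_pos_iff.2 hw
  simp only [φtransfer, sat_conj, sat_fiff]
  rw [sat_ψshadowy hw]
  refine and_congr_right fun hs => ?_
  have hlast : w.length - 1 = w.length - 2 + 1 := by
    have := Nat.even_iff.1 hs.1
    omega
  rw [hs.sat_G_imp_wht_iff, hs.sat_G_imp_shdw_iff, hs.sat_G_wht_imp_half_iff,
    hs.sat_fut_φstl_conj_iff hn, hs.sat_fut_φlast_conj_iff hn, hlast,
    forall_even_add_one_lt_iff hs.1 hn]

theorem φtransfer_correct
    (wht shdw σ σt : ℕ)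
    (hws : wht ≠ shdw) (hσσt : σ ≠ σt)
    (hσw : σ ≠ wht) (hσs : σ ≠ shdw) (hσtw : σt ≠ wht) (hσts : σt ≠ shdw)
    (w : Word) (hw : w ≠ []) :
    Sat w 0 (φtransfer wht shdw σ σt) ↔
      (Shadowy wht shdw w ∧
       (∀ j < w.length, σ ∈ w.getD j ∅ → Even j) ∧
       (∀ j < w.length, σt ∈ w.getD j ∅ → Odd j) ∧
       (∀ p, Even p → p + 1 < w.length →
          (σ ∈ w.getD p ∅ ↔ σt ∈ w.getD (p + 1) ∅))) :=
  φtransfer_correct_general wht shdw σ σt w hw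

end Transfer9
end

section
/- Let Σ ⊆ AP \ {wht, shdw} be finite with an injective map σ ↦ σ̃ such that σ̃ ∉ Σ and σ̃ ≠ σ for each σ ∈ Σ. The formula ψ^{truly-Σ}_shadowy, defined as the conjunction of ψ_shadowy and of φ_transfer^{σ,σ̃} over all σ ∈ Σ, defines exactly the truly Σ-shadowy words: for every finite word w, w,0 ⊨ ψ^{truly-Σ}_shadowy iff w is truly Σ-shadowy. -/
/- STATEMENT 10: ψ^{truly-Sig}_shadowy defines exactly the truly Sig-shadowy words. -/

namespace TrulyShadowy10

abbrev Word := List (Set ℕ)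

inductive Formula where
  | atom (a : ℕ)
  | neg (φ : Formula)
  | conj (φ ψ : Formula)
  | fut (φ : Formula)
  | half (φ : Formula)

def Sat (w : Word) : ℕ → Formula → Prop
  | i, .atom a => a ∈ w.getD i ∅
  | i, .neg φ => ¬ Sat w i φ
  | i, .conj φ ψ => Sat w i φ ∧ Sat w i ψ
  | i, .fut φ => ∃ j, i ≤ j ∧ j < w.length ∧ Sat w j φ
  | i, .half φ => 2 * Set.ncard {j | j < i ∧ Sat w j φ} = i

def fdisj (φ ψ : Formula) : Formula := .neg (.conj (.neg φ) (.neg ψ))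
def fimpl (φ ψ : Formula) : Formula := fdisj (.neg φ) ψ
def fiff (φ ψ : Formula) : Formula := .conj (fimpl φ ψ) (fimpl ψ φ)
def G (φ : Formula) : Formula := .neg (.fut (.neg φ))
def ftop : Formula := .neg (.conj (.atom 0) (.neg (.atom 0)))
def bigConj (l : List Formula) : Formula := l.foldr .conj ftop

def φinit (wht shdw : ℕ) : Formula :=
  .conj (.atom wht)
    (.conj (G (fiff (.atom wht) (.neg (.atom shdw))))
           (G (fimpl (.atom wht) (.fut (.atom shdw)))))

def ψshadowy (wht shdw : ℕ) : Formula :=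
  .conj (φinit wht shdw) (G (fiff (.half (.atom wht)) (.atom wht)))

def φlast (shdw : ℕ) : Formula := G (.atom shdw)
def φstl (wht shdw : ℕ) : Formula := .conj (.atom wht) (G (fdisj (.atom wht) (φlast shdw)))

def φtransfer (wht shdw σ σt : ℕ) : Formula :=
  .conj (ψshadowy wht shdw)
    (.conj (G (fimpl (.atom σ) (.atom wht)))
      (.conj (G (fimpl (.atom σt) (.atom shdw)))
        (.conj (G (fimpl (.atom wht)
                    (.half (fdisj (.conj (.atom wht) (.atom σ))
                                  (.conj (.atom shdw) (.neg (.atom σt)))))))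
               (fiff (.fut (.conj (φstl wht shdw) (.atom σ)))
                     (.fut (.conj (φlast shdw) (.atom σt)))))))

/-- `ψ^{truly-Sig}_shadowy`: the conjunction of `ψ_shadowy` and of `φ_transfer^{σ,σ̃}`
over all `σ ∈ Sig`. -/
noncomputable def ψtruly (wht shdw : ℕ) (Sig : Finset ℕ) (tilde : ℕ → ℕ) : Formula :=
  bigConj (ψshadowy wht shdw :: Sig.toList.map (fun σ => φtransfer wht shdw σ (tilde σ)))

def Shadowy (wht shdw : ℕ) (w : Word) : Prop :=
  Even w.length ∧
  (∀ j < w.length, Even j → wht ∈ w.getD j ∅ ∧ shdw ∉ w.getD j ∅) ∧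
  (∀ j < w.length, Odd j → shdw ∈ w.getD j ∅ ∧ wht ∉ w.getD j ∅)

/-- A shadowy word is truly Sig-shadowy if, for every `σ ∈ Sig`, only white positions may
carry `σ`, only shadow positions may carry `σ̃`, and every white position transfers
`σ` to `σ̃` on its successor. -/
def TrulyShadowy (wht shdw : ℕ) (Sig : Finset ℕ) (tilde : ℕ → ℕ) (w : Word) : Prop :=
  Shadowy wht shdw w ∧
  ∀ σ ∈ Sig,
    (∀ j < w.length, σ ∈ w.getD j ∅ → Even j) ∧
    (∀ j < w.length, tilde σ ∈ w.getD j ∅ → Odd j) ∧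
    (∀ p, Even p → p + 1 < w.length →
        (σ ∈ w.getD p ∅ ↔ tilde σ ∈ w.getD (p + 1) ∅))

/-! Reading `G (Half wht ↔ wht)` by strong induction forces `wht` onto exactly the even
positions, so `ψ_shadowy` defines the shadowy words. On a shadowy word, the count in
`G (wht → Half ([wht ∧ σ] ∨ [shdw ∧ ¬σ̃]))` grows by exactly one on each block `(2m, 2m+1)`
before the last one iff `σ ∈ w_{2m} ↔ σ̃ ∈ w_{2m+1}`; the last block is covered by
`F (φ_stl ∧ σ) ↔ F (φ_last ∧ σ̃)`, as `φ_stl` and `φ_last` hold exactly at the last two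
positions. -/

section Semantics

variable {w : Word} {i : ℕ} {φ ψ : Formula}

@[simp] lemma sat_atom {a : ℕ} : Sat w i (.atom a) ↔ a ∈ w.getD i ∅ := Iff.rfl
@[simp] lemma sat_neg : Sat w i (.neg φ) ↔ ¬ Sat w i φ := Iff.rfl
@[simp] lemma sat_conj : Sat w i (.conj φ ψ) ↔ Sat w i φ ∧ Sat w i ψ := Iff.rfl
@[simp] lemma sat_fut : Sat w i (.fut φ) ↔ ∃ j, i ≤ j ∧ j < w.length ∧ Sat w j φ := Iff.rfl
@[simp] lemma sat_half : Sat w i (.half φ) ↔ 2 * {j | j < i ∧ Sat w j φ}.ncard = i := Iff.rfl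

@[simp] lemma sat_fdisj : Sat w i (fdisj φ ψ) ↔ Sat w i φ ∨ Sat w i ψ := by
  simp only [fdisj, sat_neg, sat_conj]; tauto

@[simp] lemma sat_fimpl : Sat w i (fimpl φ ψ) ↔ (Sat w i φ → Sat w i ψ) := by
  simp only [fimpl, sat_fdisj, sat_neg]; tauto

@[simp] lemma sat_fiff : Sat w i (fiff φ ψ) ↔ (Sat w i φ ↔ Sat w i ψ) := by
  simp only [fiff, sat_conj, sat_fimpl]; tauto

@[simp] lemma sat_G : Sat w i (G φ) ↔ ∀ j, i ≤ j → j < w.length → Sat w j φ := by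
  simp [G]

lemma sat_bigConj {l : List Formula} : Sat w i (bigConj l) ↔ ∀ φ ∈ l, Sat w i φ := by
  induction l with
  | nil => simp [bigConj, ftop]
  | cons ψ l ih => simp [bigConj, ← ih]

lemma sat_fut_conj_iff_of_unique {k : ℕ} (hk : k < w.length)
    (hφ : ∀ j < w.length, Sat w j φ ↔ j = k) :
    Sat w 0 (.fut (.conj φ ψ)) ↔ Sat w k ψ := by
  simp only [sat_fut, sat_conj]
  constructor
  · rintro ⟨j, -, hj, hφj, hψj⟩
    rwa [(hφ j hj).mp hφj] at hψj
  · exact fun hψk => ⟨k, k.zero_le, hk, (hφ k hk).mpr rfl, hψk⟩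

end Semantics

section Counting

variable {P Q : ℕ → Prop} {i N : ℕ}

lemma ncard_setOf_lt_eq_count (P : ℕ → Prop) [DecidablePred P] (i : ℕ) :
    {j | j < i ∧ P j}.ncard = Nat.count P i := by
  rw [Nat.count_eq_card_filter_range, ← Set.ncard_coe_finset]
  congr 1
  ext j
  simp

lemma ncard_setOf_lt_congr (h : ∀ j < i, P j ↔ Q j) :
    {j | j < i ∧ P j}.ncard = {j | j < i ∧ Q j}.ncard := by
  congr 1
  ext j
  exact and_congr_right fun hj => h j hj

open scoped Classical in
lemma ncard_setOf_lt_add_two (P : ℕ → Prop) (p : ℕ) :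
    {j | j < p + 2 ∧ P j}.ncard =
      {j | j < p ∧ P j}.ncard + ((if P p then 1 else 0) + if P (p + 1) then 1 else 0) := by
  simp only [ncard_setOf_lt_eq_count, Nat.count_succ, add_assoc]

lemma two_mul_ncard_setOf_lt_even_iff (i : ℕ) : 2 * {j | j < i ∧ Even j}.ncard = i ↔ Even i := by
  classical
  have hcount : ∀ n, Nat.count Even n = (n + 1) / 2 := by
    intro n
    induction n with
    | zero => rfl
    | succ n ih =>
      rw [Nat.count_succ, ih]
      split_ifs with hn <;> grind
  rw [ncard_setOf_lt_eq_count, hcount, Nat.even_iff]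
  omega

lemma forall_two_mul_ncard_eq_iff_iff_even :
    (∀ i < N, (2 * {j | j < i ∧ P j}.ncard = i ↔ P i)) ↔ ∀ i < N, (P i ↔ Even i) := by
  constructor
  · intro h i
    induction i using Nat.strong_induction_on with
    | _ i ih =>
      intro hi
      rw [← h i hi, ncard_setOf_lt_congr fun j hj => ih j hj (hj.trans hi),
        two_mul_ncard_setOf_lt_even_iff]
  · intro h i hi
    rw [ncard_setOf_lt_congr fun j hj => h j (hj.trans hi), two_mul_ncard_setOf_lt_even_iff,
      h i hi]

lemma forall_even_two_mul_ncard_eq_iff :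
    (∀ i < N, Even i → 2 * {j | j < i ∧ P j}.ncard = i) ↔
      ∀ p, Even p → p + 2 < N → (P p ↔ ¬ P (p + 1)) := by
  have step : ∀ p, 2 * {j | j < p ∧ P j}.ncard = p →
      (2 * {j | j < p + 2 ∧ P j}.ncard = p + 2 ↔ (P p ↔ ¬ P (p + 1))) := by
    intro p hp
    classical
    rw [ncard_setOf_lt_add_two]
    split_ifs <;> simp_all <;> omega
  constructor
  · intro h p hp hpN
    exact (step p (h p (by omega) hp)).mp (h (p + 2) hpN (hp.add even_two))
  · intro h i hi ⟨m, hm⟩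
    subst hm
    induction m with
    | zero => simp
    | succ m ih =>
      have hm : Even (m + m) := ⟨m, rfl⟩
      have := (step (m + m) (ih (by omega))).mpr (h (m + m) hm (by omega))
      rwa [show m + 1 + (m + 1) = m + m + 2 by ring]

end Counting

section Shadowy

variable {wht shdw σ σt : ℕ} {w : Word} {i j : ℕ}

lemma Shadowy.mem_wht_iff (hS : Shadowy wht shdw w) (hi : i < w.length) :
    wht ∈ w.getD i ∅ ↔ Even i := by
  rcases Nat.even_or_odd i with h | h
  · exact iff_of_true (hS.2.1 i hi h).1 h
  · exact iff_of_false (hS.2.2 i hi h).2 (Nat.not_even_iff_odd.mpr h)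

lemma Shadowy.mem_shdw_iff (hS : Shadowy wht shdw w) (hi : i < w.length) :
    shdw ∈ w.getD i ∅ ↔ ¬ Even i := by
  rcases Nat.even_or_odd i with h | h
  · exact iff_of_false (hS.2.1 i hi h).2 (not_not.mpr h)
  · exact iff_of_true (hS.2.2 i hi h).1 (Nat.not_even_iff_odd.mpr h)

lemma shadowy_of_mem_iff (hlen : Even w.length)
    (hwht : ∀ i < w.length, wht ∈ w.getD i ∅ ↔ Even i)
    (hshdw : ∀ i < w.length, shdw ∈ w.getD i ∅ ↔ ¬ Even i) : Shadowy wht shdw w := by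
  refine ⟨hlen, fun i hi he => ?_, fun i hi ho => ?_⟩
  · rw [hwht i hi, hshdw i hi]
    exact ⟨he, not_not.mpr he⟩
  · rw [hwht i hi, hshdw i hi]
    exact ⟨Nat.not_even_iff_odd.mpr ho, Nat.not_even_iff_odd.mpr ho⟩

lemma sat_ψshadowy_iff (hw : w ≠ []) : Sat w 0 (ψshadowy wht shdw) ↔ Shadowy wht shdw w := by
  have hpos : 0 < w.length := List.length_pos_iff.mpr hw
  simp only [ψshadowy, φinit, sat_conj, sat_atom, sat_G, sat_fiff, sat_fimpl, sat_neg, sat_half,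
    sat_fut, zero_le, true_imp_iff]
  constructor
  · rintro ⟨⟨-, hshdw, hnext⟩, hhalf⟩
    have hwht := forall_two_mul_ncard_eq_iff_iff_even.mp hhalf
    have hshdw' : ∀ i < w.length, shdw ∈ w.getD i ∅ ↔ ¬ Even i := fun i hi => by
      rw [← hwht i hi, hshdw i hi, not_not]
    refine shadowy_of_mem_iff ?_ hwht hshdw'
    by_contra hodd
    have hlast : Even (w.length - 1) := by grind
    obtain ⟨j, hj, hjlen, hj'⟩ := hnext _ (by omega) ((hwht _ (by omega)).mpr hlast)
    exact (hshdw' j hjlen).mp hj' (by rwa [show j = w.length - 1 by omega])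
  · intro hS
    refine ⟨⟨(hS.mem_wht_iff hpos).mpr Even.zero, fun i hi => ?_, fun i hi hi' => ?_⟩,
      forall_two_mul_ncard_eq_iff_iff_even.mpr fun i hi => hS.mem_wht_iff hi⟩
    · rw [hS.mem_wht_iff hi, hS.mem_shdw_iff hi, not_not]
    · have hie := (hS.mem_wht_iff hi).mp hi'
      have hi1 : i + 1 < w.length := by grind [hS.1]
      exact ⟨i + 1, i.le_succ, hi1, (hS.mem_shdw_iff hi1).mpr (by grind)⟩

lemma Shadowy.sat_φlast_iff (hS : Shadowy wht shdw w) (hj : j < w.length) :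
    Sat w j (φlast shdw) ↔ j + 1 = w.length := by
  have := hS.1
  simp only [φlast, sat_G, sat_atom]
  constructor
  · intro h
    by_contra hne
    have h0 := (hS.mem_shdw_iff hj).mp (h j le_rfl hj)
    have h1 := (hS.mem_shdw_iff (i := j + 1) (by omega)).mp (h (j + 1) (by omega) (by omega))
    grind
  · intro hj1 k hjk hk
    rw [hS.mem_shdw_iff hk, show k = j by omega]
    grind

lemma Shadowy.sat_φstl_iff (hS : Shadowy wht shdw w) (hj : j < w.length) :
    Sat w j (φstl wht shdw) ↔ j + 2 = w.length := by
  have := hS.1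
  simp only [φstl, sat_conj, sat_atom, sat_G, sat_fdisj, hS.mem_wht_iff hj]
  constructor
  · rintro ⟨hje, h⟩
    by_contra hne
    have hj1 : j + 1 < w.length := by grind
    rcases h (j + 1) (by omega) hj1 with h1 | h1
    · grind [(hS.mem_wht_iff hj1).mp h1]
    · grind [(hS.sat_φlast_iff hj1).mp h1]
  · intro hj2
    refine ⟨by grind, fun k hjk hk => ?_⟩
    rw [hS.mem_wht_iff hk, hS.sat_φlast_iff hk]
    grind

end Shadowy

section Transfer

variable {wht shdw σ σt : ℕ} {w : Word}

lemma Shadowy.sat_G_wht_imp_half_iff (hS : Shadowy wht shdw w) :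
    Sat w 0 (G (fimpl (.atom wht)
      (.half (fdisj (.conj (.atom wht) (.atom σ)) (.conj (.atom shdw) (.neg (.atom σt))))))) ↔
      ∀ p, Even p → p + 2 < w.length → (σ ∈ w.getD p ∅ ↔ σt ∈ w.getD (p + 1) ∅) := by
  set P : ℕ → Prop := fun j => (Even j ∧ σ ∈ w.getD j ∅) ∨ (¬ Even j ∧ σt ∉ w.getD j ∅)
  have hP : ∀ j < w.length, Sat w j
      (fdisj (.conj (.atom wht) (.atom σ)) (.conj (.atom shdw) (.neg (.atom σt)))) ↔ P j := by
    intro j hj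
    simp only [sat_fdisj, sat_conj, sat_neg, sat_atom, hS.mem_wht_iff hj, hS.mem_shdw_iff hj, P]
  calc _ ↔ ∀ i < w.length, Even i → 2 * {j | j < i ∧ P j}.ncard = i := by
        simp only [sat_G, sat_fimpl, sat_atom, sat_half, zero_le, true_imp_iff]
        refine forall₂_congr fun i hi => ?_
        rw [hS.mem_wht_iff hi, ncard_setOf_lt_congr fun j hj => hP j (hj.trans hi)]
    _ ↔ ∀ p, Even p → p + 2 < w.length → (P p ↔ ¬ P (p + 1)) :=
        forall_even_two_mul_ncard_eq_iff
    _ ↔ _ := by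
        refine forall₂_congr fun p hp => imp_congr_right fun _ => ?_
        simp [P, hp, Nat.even_add_one, Nat.not_odd_iff_even.mpr hp]

lemma Shadowy.sat_fut_stl_iff_fut_last_iff (hS : Shadowy wht shdw w) (hw : w ≠ []) :
    Sat w 0 (fiff (.fut (.conj (φstl wht shdw) (.atom σ)))
      (.fut (.conj (φlast shdw) (.atom σt)))) ↔
      (σ ∈ w.getD (w.length - 2) ∅ ↔ σt ∈ w.getD (w.length - 1) ∅) := by
  have hlen : 2 ≤ w.length := by grind [hS.1, List.length_pos_iff.mpr hw]
  rw [sat_fiff,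
    sat_fut_conj_iff_of_unique (k := w.length - 2) (by omega)
      fun j hj => (hS.sat_φstl_iff hj).trans (by omega),
    sat_fut_conj_iff_of_unique (k := w.length - 1) (by omega)
      fun j hj => (hS.sat_φlast_iff hj).trans (by omega)]
  rfl

lemma Shadowy.sat_φtransfer_iff (hS : Shadowy wht shdw w) (hw : w ≠ []) :
    Sat w 0 (φtransfer wht shdw σ σt) ↔
      (∀ j < w.length, σ ∈ w.getD j ∅ → Even j) ∧
      (∀ j < w.length, σt ∈ w.getD j ∅ → Odd j) ∧
      (∀ p, Even p → p + 1 < w.length → (σ ∈ w.getD p ∅ ↔ σt ∈ w.getD (p + 1) ∅)) := by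
  have hlen : 2 ≤ w.length := by grind [hS.1, List.length_pos_iff.mpr hw]
  have hblocks : ∀ Q : ℕ → Prop, ((∀ p, Even p → p + 2 < w.length → Q p) ∧ Q (w.length - 2) ↔
      ∀ p, Even p → p + 1 < w.length → Q p) := by
    intro Q
    constructor
    · rintro ⟨hQ, hlast⟩ p hp hp1
      rcases lt_or_eq_of_le (show p + 2 ≤ w.length by grind [hS.1]) with h | h
      · exact hQ p hp h
      · rwa [show p = w.length - 2 by omega]
    · intro hQ
      exact ⟨fun p hp _ => hQ p hp (by omega), hQ _ (by grind [hS.1]) (by omega)⟩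
  simp only [φtransfer, sat_conj, (sat_ψshadowy_iff hw).mpr hS, true_and, hS.sat_G_wht_imp_half_iff,
    hS.sat_fut_stl_iff_fut_last_iff hw, ← hblocks]
  rw [show w.length - 2 + 1 = w.length - 1 by omega]
  refine and_congr ?_ (and_congr ?_ Iff.rfl) <;>
    simp only [sat_G, sat_fimpl, sat_atom, zero_le, true_imp_iff] <;>
    refine forall₂_congr fun j hj => ?_
  · rw [hS.mem_wht_iff hj]
  · rw [hS.mem_shdw_iff hj, Nat.not_even_iff_odd]

end Transfer

theorem ψtruly_defines_trulyShadowy_general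
    (wht shdw : ℕ)
    (Sig : Finset ℕ) (tilde : ℕ → ℕ)
    (w : Word) (hw : w ≠ []) :
    Sat w 0 (ψtruly wht shdw Sig tilde) ↔ TrulyShadowy wht shdw Sig tilde w := by
  simp only [ψtruly, sat_bigConj, List.forall_mem_cons, List.forall_mem_map, Finset.mem_toList]
  rw [sat_ψshadowy_iff hw, TrulyShadowy]
  exact and_congr_right fun hS => forall₂_congr fun σ _ => hS.sat_φtransfer_iff hw

theorem ψtruly_defines_trulyShadowy
    (wht shdw : ℕ) (hws : wht ≠ shdw)
    (Sig : Finset ℕ) (tilde : ℕ → ℕ)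
    (hSigw : ∀ σ ∈ Sig, σ ≠ wht ∧ σ ≠ shdw)
    (htilde_ne : ∀ σ ∈ Sig, tilde σ ≠ σ ∧ tilde σ ∉ Sig ∧ tilde σ ≠ wht ∧ tilde σ ≠ shdw)
    (htilde_inj : ∀ σ ∈ Sig, ∀ σ' ∈ Sig, tilde σ = tilde σ' → σ = σ')
    (w : Word) (hw : w ≠ []) :
    Sat w 0 (ψtruly wht shdw Sig tilde) ↔ TrulyShadowy wht shdw Sig tilde w :=
  ψtruly_defines_trulyShadowy_general wht shdw Sig tilde w hw
end TrulyShadowy10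
end

section
/- Let Σ ⊆ AP \ {wht, shdw} be finite and α ≠ β be letters in Σ. Define φ^=_{α,β} := Half([wht ∧ α] ∨ [shdw ∧ ¬β̃]). Then for every truly Σ-shadowy word w and every even (white) position p of w: w,p ⊨ φ^=_{α,β} if and only if |{j < p : wht ∈ w_j and α ∈ w_j}| = |{j < p : wht ∈ w_j and β ∈ w_j}|. -/
/-! Read a truly shadowy word in pairs `(2n, 2n+1)` of a white position and its shadow. The
formula under `Half` holds at `2n` iff `α ∈ w_{2n}`, and at `2n+1` iff `β̃ ∉ w_{2n+1}`, i.e.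
iff `β ∉ w_{2n}`. Hence among the first `2k` positions it holds `#α - #β + k` times, and `Half`
asks for exactly `k`. -/

namespace EqCard11

abbrev Word := List (Set ℕ)

inductive Formula where
  | atom (a : ℕ)
  | neg (φ : Formula)
  | conj (φ ψ : Formula)
  | fut (φ : Formula)
  | half (φ : Formula)

def Sat (w : Word) : ℕ → Formula → Prop
  | i, .atom a => a ∈ w.getD i ∅
  | i, .neg φ => ¬ Sat w i φ
  | i, .conj φ ψ => Sat w i φ ∧ Sat w i ψ
  | i, .fut φ => ∃ j, i ≤ j ∧ j < w.length ∧ Sat w j φ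
  | i, .half φ => 2 * Set.ncard {j | j < i ∧ Sat w j φ} = i

def fdisj (φ ψ : Formula) : Formula := .neg (.conj (.neg φ) (.neg ψ))

/-- `φ^=_{α,β} := Half([wht ∧ α] ∨ [shdw ∧ ¬β̃])`. -/
def φeq (wht shdw : ℕ) (tilde : ℕ → ℕ) (α β : ℕ) : Formula :=
  .half (fdisj (.conj (.atom wht) (.atom α))
               (.conj (.atom shdw) (.neg (.atom (tilde β)))))

def Shadowy (wht shdw : ℕ) (w : Word) : Prop :=
  Even w.length ∧
  (∀ j < w.length, Even j → wht ∈ w.getD j ∅ ∧ shdw ∉ w.getD j ∅) ∧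
  (∀ j < w.length, Odd j → shdw ∈ w.getD j ∅ ∧ wht ∉ w.getD j ∅)

def TrulyShadowy (wht shdw : ℕ) (Sig : Finset ℕ) (tilde : ℕ → ℕ) (w : Word) : Prop :=
  Shadowy wht shdw w ∧
  ∀ σ ∈ Sig,
    (∀ j < w.length, σ ∈ w.getD j ∅ → Even j) ∧
    (∀ j < w.length, tilde σ ∈ w.getD j ∅ → Odd j) ∧
    (∀ p, Even p → p + 1 < w.length →
        (σ ∈ w.getD p ∅ ↔ tilde σ ∈ w.getD (p + 1) ∅))

section
variable {wht shdw : ℕ} {tilde : ℕ → ℕ} {α β : ℕ} {w : Word}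

lemma ncard_setOf_lt_and_eq_count (P : ℕ → Prop) [DecidablePred P] (n : ℕ) :
    Set.ncard {j | j < n ∧ P j} = Nat.count P n := by
  rw [Nat.count_eq_card_filter_range, ← Set.ncard_coe_finset]
  congr
  ext j
  simp

lemma sat_fdisj (φ ψ : Formula) (i : ℕ) :
    Sat w i (fdisj φ ψ) ↔ Sat w i φ ∨ Sat w i ψ := by
  simp only [fdisj, Sat]
  tauto

def φeqBody (wht shdw : ℕ) (tilde : ℕ → ℕ) (α β : ℕ) : Formula :=
  fdisj (.conj (.atom wht) (.atom α)) (.conj (.atom shdw) (.neg (.atom (tilde β))))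

open Classical in
lemma sat_φeq_iff (p : ℕ) :
    Sat w p (φeq wht shdw tilde α β) ↔
      2 * Nat.count (fun j => Sat w j (φeqBody wht shdw tilde α β)) p = p := by
  rw [← ncard_setOf_lt_and_eq_count]
  rfl

namespace Shadowy

variable (hw : Shadowy wht shdw w)
include hw

lemma sat_φeqBody_of_even {j : ℕ} (hj : j < w.length) (he : Even j) :
    Sat w j (φeqBody wht shdw tilde α β) ↔ α ∈ w.getD j ∅ := by
  have := hw.2.1 j hj he
  simp only [φeqBody, sat_fdisj, Sat]
  tauto

lemma sat_φeqBody_of_odd {j : ℕ} (hj : j < w.length) (ho : Odd j) :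
    Sat w j (φeqBody wht shdw tilde α β) ↔ tilde β ∉ w.getD j ∅ := by
  have := hw.2.2 j hj ho
  simp only [φeqBody, sat_fdisj, Sat]
  tauto

lemma white_and_iff_of_even {j : ℕ} (hj : j < w.length) (he : Even j) (a : ℕ) :
    wht ∈ w.getD j ∅ ∧ a ∈ w.getD j ∅ ↔ a ∈ w.getD j ∅ :=
  and_iff_right (hw.2.1 j hj he).1

lemma not_white_of_odd {j : ℕ} (hj : j < w.length) (ho : Odd j) (a : ℕ) :
    ¬ (wht ∈ w.getD j ∅ ∧ a ∈ w.getD j ∅) :=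
  fun h => (hw.2.2 j hj ho).2 h.1

open Classical in
lemma count_φeqBody_add_count_white (hlink : ∀ p, Even p → p + 1 < w.length →
      (β ∈ w.getD p ∅ ↔ tilde β ∈ w.getD (p + 1) ∅))
    {k : ℕ} (hk : 2 * k ≤ w.length) :
    Nat.count (fun j => Sat w j (φeqBody wht shdw tilde α β)) (2 * k) +
        Nat.count (fun j => wht ∈ w.getD j ∅ ∧ β ∈ w.getD j ∅) (2 * k) =
      Nat.count (fun j => wht ∈ w.getD j ∅ ∧ α ∈ w.getD j ∅) (2 * k) + k := by
  induction k with
  | zero => simp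
  | succ n ih =>
    have h0 : 2 * n < w.length := by omega
    have h1 : 2 * n + 1 < w.length := by omega
    have he : Even (2 * n) := even_two_mul n
    have ho : Odd (2 * n + 1) := odd_two_mul_add_one n
    rw [show 2 * (n + 1) = 2 * n + 1 + 1 by ring]
    simp only [Nat.count_succ, hw.sat_φeqBody_of_even h0 he, hw.sat_φeqBody_of_odd h1 ho,
      ← hlink _ he h1, hw.white_and_iff_of_even h0 he, hw.not_white_of_odd h1 ho, if_false]
    have := ih (by omega)
    split_ifs <;> omega

end Shadowy

end

theorem φeq_correct_general
    (wht shdw : ℕ)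
    (Sig : Finset ℕ) (tilde : ℕ → ℕ)
    (α β : ℕ) (hβ : β ∈ Sig)
    (w : Word) (htruly : TrulyShadowy wht shdw Sig tilde w)
    (p : ℕ) (hp : p < w.length) (hpe : Even p) :
    Sat w p (φeq wht shdw tilde α β) ↔
      Set.ncard {j | j < p ∧ wht ∈ w.getD j ∅ ∧ α ∈ w.getD j ∅} =
      Set.ncard {j | j < p ∧ wht ∈ w.getD j ∅ ∧ β ∈ w.getD j ∅} := by
  classical
  obtain ⟨k, rfl⟩ := hpe
  have key := htruly.1.count_φeqBody_add_count_white (α := α) (htruly.2 β hβ).2.2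
    (k := k) (by omega)
  rw [sat_φeq_iff, ncard_setOf_lt_and_eq_count, ncard_setOf_lt_and_eq_count, ← two_mul]
  omega

theorem φeq_correct
    (wht shdw : ℕ) (hws : wht ≠ shdw)
    (Sig : Finset ℕ) (tilde : ℕ → ℕ)
    (hSigw : ∀ σ ∈ Sig, σ ≠ wht ∧ σ ≠ shdw)
    (htilde_ne : ∀ σ ∈ Sig, tilde σ ≠ σ ∧ tilde σ ∉ Sig ∧ tilde σ ≠ wht ∧ tilde σ ≠ shdw)
    (htilde_inj : ∀ σ ∈ Sig, ∀ σ' ∈ Sig, tilde σ = tilde σ' → σ = σ')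
    (α β : ℕ) (hα : α ∈ Sig) (hβ : β ∈ Sig) (hαβ : α ≠ β)
    (w : Word) (hw : w ≠ []) (htruly : TrulyShadowy wht shdw Sig tilde w)
    (p : ℕ) (hp : p < w.length) (hpe : Even p) :
    Sat w p (φeq wht shdw tilde α β) ↔
      Set.ncard {j | j < p ∧ wht ∈ w.getD j ∅ ∧ α ∈ w.getD j ∅} =
      Set.ncard {j | j < p ∧ wht ∈ w.getD j ∅ ∧ β ∈ w.getD j ∅} :=
  φeq_correct_general wht shdw Sig tilde α β hβ w htruly p hp hpe

end EqCard11
end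

section
/- Let φ_init := wht ∧ G(wht ↔ ¬shdw) ∧ G(wht → F shdw) and ψ^MFL_shadowy := φ_init ∧ G[MFL(wht) ∧ (wht ↔ MFL(shdw))]. Then for every finite word w over subsets of AP: w,0 ⊨ ψ^MFL_shadowy if and only if w is strongly shadowy. -/
/- STATEMENT 16: The LTL_F+MFL formula ψ^MFL_shadowy defines exactly the strongly
shadowy words. -/

namespace MFL16

abbrev Word := List (Set ℕ)

inductive Formula where
  | atom (a : ℕ)
  | neg (φ : Formula)
  | conj (φ ψ : Formula)
  | fut (φ : Formula)
  | mfl (σ : ℕ)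

/-- Number of positions `j < i` of `w` whose label contains the letter `a`. -/
noncomputable def cnt (w : Word) (a : ℕ) (i : ℕ) : ℕ :=
  Set.ncard {j | j < i ∧ a ∈ w.getD j ∅}

def Sat (w : Word) : ℕ → Formula → Prop
  | i, .atom a => a ∈ w.getD i ∅
  | i, .neg φ => ¬ Sat w i φ
  | i, .conj φ ψ => Sat w i φ ∧ Sat w i ψ
  | i, .fut φ => ∃ j, i ≤ j ∧ j < w.length ∧ Sat w j φ
  | i, .mfl σ => ∀ τ : ℕ, cnt w τ i ≤ cnt w σ i

def fdisj (φ ψ : Formula) : Formula := .neg (.conj (.neg φ) (.neg ψ))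
def fimpl (φ ψ : Formula) : Formula := fdisj (.neg φ) ψ
def fiff (φ ψ : Formula) : Formula := .conj (fimpl φ ψ) (fimpl ψ φ)
def G (φ : Formula) : Formula := .neg (.fut (.neg φ))

/-- `φ_init := wht ∧ G(wht ↔ ¬shdw) ∧ G(wht → F shdw)`. -/
def φinit (wht shdw : ℕ) : Formula :=
  .conj (.atom wht)
    (.conj (G (fiff (.atom wht) (.neg (.atom shdw))))
           (G (fimpl (.atom wht) (.fut (.atom shdw)))))

/-- `ψ^MFL_shadowy := φ_init ∧ G[MFL(wht) ∧ (wht ↔ MFL(shdw))]`. -/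
def ψMFLshadowy (wht shdw : ℕ) : Formula :=
  .conj (φinit wht shdw)
        (G (.conj (.mfl wht) (fiff (.atom wht) (.mfl shdw))))

def Shadowy (wht shdw : ℕ) (w : Word) : Prop :=
  Even w.length ∧
  (∀ j < w.length, Even j → wht ∈ w.getD j ∅ ∧ shdw ∉ w.getD j ∅) ∧
  (∀ j < w.length, Odd j → shdw ∈ w.getD j ∅ ∧ wht ∉ w.getD j ∅)

/-- A word is strongly shadowy: it is shadowy, at every even position both `wht` and
`shdw` are among the most frequent letters in the past, and at every odd position
`wht` is among the most frequent letters in the past. -/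
def StronglyShadowy (wht shdw : ℕ) (w : Word) : Prop :=
  Shadowy wht shdw w ∧
  (∀ i < w.length, Even i → ∀ τ : ℕ, cnt w τ i ≤ cnt w wht i ∧ cnt w τ i ≤ cnt w shdw i) ∧
  (∀ i < w.length, Odd i → ∀ τ : ℕ, cnt w τ i ≤ cnt w wht i)

/-! Since `MFL(wht)` holds everywhere, `MFL(shdw)` holds at `i` iff `shdw` has occurred as often
as `wht` before `i`. If the word alternates `wht, shdw, wht, …` before `i`, these counts are
`⌈i/2⌉` and `⌊i/2⌋`, so `wht ↔ MFL(shdw)` and `wht ↔ ¬shdw` extend the alternation to `i`.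
`wht → F shdw` at the last position then makes the length even. -/

section Semantics

variable {w : Word} {i : ℕ} {φ ψ : Formula}

@[simp] lemma sat_fimpl : Sat w i (fimpl φ ψ) ↔ (Sat w i φ → Sat w i ψ) := by
  simp only [fimpl, fdisj, Sat]
  tauto

@[simp] lemma sat_fiff : Sat w i (fiff φ ψ) ↔ (Sat w i φ ↔ Sat w i ψ) := by
  simp only [fiff, Sat, sat_fimpl]
  tauto

lemma sat_G : Sat w i (G φ) ↔ ∀ j, i ≤ j → j < w.length → Sat w j φ := by
  simp [G, Sat]

end Semantics

section Counting

variable {w : Word} {a i : ℕ}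

lemma cnt_zero : cnt w a 0 = 0 := by
  simp [cnt]

lemma cnt_succ_of_mem (h : a ∈ w.getD i ∅) : cnt w a (i + 1) = cnt w a i + 1 := by
  have hset : {j | j < i + 1 ∧ a ∈ w.getD j ∅} = insert i {j | j < i ∧ a ∈ w.getD j ∅} := by
    ext j
    grind
  rw [cnt, cnt, hset, Set.ncard_insert_of_notMem (by simp)
    ((Set.finite_lt_nat i).subset fun _ hj => hj.1)]

lemma cnt_succ_of_notMem (h : a ∉ w.getD i ∅) : cnt w a (i + 1) = cnt w a i := by
  have hset : {j | j < i + 1 ∧ a ∈ w.getD j ∅} = {j | j < i ∧ a ∈ w.getD j ∅} := by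
    ext j
    grind
  rw [cnt, cnt, hset]

end Counting

def Alternates (wht shdw : ℕ) (w : Word) (n : ℕ) : Prop :=
  ∀ j < n, (wht ∈ w.getD j ∅ ↔ Even j) ∧ (shdw ∈ w.getD j ∅ ↔ Odd j)

namespace Alternates

variable {wht shdw : ℕ} {w : Word} {n : ℕ}

lemma mono {m : ℕ} (h : Alternates wht shdw w n) (hmn : m ≤ n) : Alternates wht shdw w m :=
  fun j hj => h j (hj.trans_le hmn)

lemma succ (h : Alternates wht shdw w n) (hwht : wht ∈ w.getD n ∅ ↔ Even n)
    (hshdw : shdw ∈ w.getD n ∅ ↔ Odd n) : Alternates wht shdw w (n + 1) := by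
  intro j hj
  rcases Nat.lt_succ_iff_lt_or_eq.mp hj with hj | rfl
  exacts [h j hj, ⟨hwht, hshdw⟩]

lemma cnt_eq (h : Alternates wht shdw w n) :
    cnt w wht n = (n + 1) / 2 ∧ cnt w shdw n = n / 2 := by
  induction n with
  | zero => simp [cnt_zero]
  | succ n ih =>
    obtain ⟨hwht, hshdw⟩ := ih (h.mono n.le_succ)
    obtain ⟨hwn, hsn⟩ := h n n.lt_succ_self
    rcases Nat.even_or_odd n with he | ho
    · rw [cnt_succ_of_mem (hwn.mpr he),
        cnt_succ_of_notMem fun hm => Nat.not_odd_iff_even.mpr he (hsn.mp hm)]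
      have := Nat.even_iff.mp he
      omega
    · rw [cnt_succ_of_notMem fun hm => Nat.not_even_iff_odd.mpr ho (hwn.mp hm),
        cnt_succ_of_mem (hsn.mpr ho)]
      have := Nat.odd_iff.mp ho
      omega

lemma cnt_le_iff_even (h : Alternates wht shdw w n) : cnt w wht n ≤ cnt w shdw n ↔ Even n := by
  obtain ⟨hwht, hshdw⟩ := h.cnt_eq
  rw [hwht, hshdw, Nat.even_iff]
  omega

lemma mostFrequent_shdw_iff_even (h : Alternates wht shdw w n)
    (hwht : ∀ τ, cnt w τ n ≤ cnt w wht n) : (∀ τ, cnt w τ n ≤ cnt w shdw n) ↔ Even n := by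
  rw [← h.cnt_le_iff_even]
  exact ⟨fun hshdw => hshdw wht, fun hle τ => (hwht τ).trans hle⟩

lemma mem_wht_iff_notMem_shdw (h : Alternates wht shdw w n) :
    ∀ j < n, (wht ∈ w.getD j ∅ ↔ shdw ∉ w.getD j ∅) := fun j hj => by
  rw [(h j hj).1, (h j hj).2, Nat.not_odd_iff_even]

end Alternates

section Shadowy

variable {wht shdw : ℕ} {w : Word}

lemma shadowy_iff_alternates :
    Shadowy wht shdw w ↔ Even w.length ∧ Alternates wht shdw w w.length := by
  refine and_congr_right fun _ => ⟨fun ⟨hev, hodd⟩ j hj => ?_, fun h => ⟨?_, ?_⟩⟩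
  · rcases Nat.even_or_odd j with he | ho
    · have := hev j hj he
      simp_all [Nat.not_odd_iff_even]
    · have := hodd j hj ho
      simp_all [Nat.not_even_iff_odd]
  · intro j hj he
    exact ⟨(h j hj).1.mpr he, fun hm => Nat.not_odd_iff_even.mpr he ((h j hj).2.mp hm)⟩
  · intro j hj ho
    exact ⟨(h j hj).2.mpr ho, fun hm => Nat.not_even_iff_odd.mpr ho ((h j hj).1.mp hm)⟩

lemma sat_ψMFLshadowy_iff :
    Sat w 0 (ψMFLshadowy wht shdw) ↔
      wht ∈ w.getD 0 ∅ ∧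
      (∀ j < w.length, (wht ∈ w.getD j ∅ ↔ shdw ∉ w.getD j ∅)) ∧
      (∀ j < w.length, wht ∈ w.getD j ∅ → ∃ k, j ≤ k ∧ k < w.length ∧ shdw ∈ w.getD k ∅) ∧
      (∀ i < w.length, ∀ τ, cnt w τ i ≤ cnt w wht i) ∧
      (∀ i < w.length, (wht ∈ w.getD i ∅ ↔ ∀ τ, cnt w τ i ≤ cnt w shdw i)) := by
  simp only [ψMFLshadowy, φinit, Sat, sat_G, sat_fiff, sat_fimpl, zero_le, true_imp_iff,
    imp_and, forall_and, and_assoc]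

lemma alternates_of_mostFrequent
    (hcompl : ∀ j < w.length, (wht ∈ w.getD j ∅ ↔ shdw ∉ w.getD j ∅))
    (hwht : ∀ i < w.length, ∀ τ, cnt w τ i ≤ cnt w wht i)
    (hshdw : ∀ i < w.length, (wht ∈ w.getD i ∅ ↔ ∀ τ, cnt w τ i ≤ cnt w shdw i)) :
    ∀ n ≤ w.length, Alternates wht shdw w n := by
  intro n
  induction n with
  | zero => exact fun _ j hj => absurd hj (Nat.not_lt_zero j)
  | succ n ih =>
    intro hn
    have halt := ih (Nat.le_of_succ_le hn)
    have hwhtn : wht ∈ w.getD n ∅ ↔ Even n := by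
      rw [hshdw n hn, halt.mostFrequent_shdw_iff_even (hwht n hn)]
    refine halt.succ hwhtn ?_
    rw [← Nat.not_even_iff_odd, ← hwhtn, hcompl n hn, not_not]

lemma even_length_of_alternates (h : Alternates wht shdw w w.length)
    (hfut : ∀ j < w.length, wht ∈ w.getD j ∅ → ∃ k, j ≤ k ∧ k < w.length ∧ shdw ∈ w.getD k ∅) :
    Even w.length := by
  by_contra hodd
  obtain ⟨m, hm⟩ := Nat.not_even_iff_odd.mp hodd
  have hlast : w.length - 1 < w.length := by omega
  have hev : Even (w.length - 1) := ⟨m, by omega⟩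
  obtain ⟨k, hk, hk', hshdw⟩ := hfut _ hlast ((h _ hlast).1.mpr hev)
  obtain rfl : k = w.length - 1 := by omega
  exact Nat.not_odd_iff_even.mpr hev ((h _ hlast).2.mp hshdw)

end Shadowy

theorem ψMFLshadowy_defines_stronglyShadowy_general (wht shdw : ℕ)
    (w : Word) (hw : w ≠ []) :
    Sat w 0 (ψMFLshadowy wht shdw) ↔ StronglyShadowy wht shdw w := by
  rw [sat_ψMFLshadowy_iff, StronglyShadowy, shadowy_iff_alternates]
  constructor
  · rintro ⟨-, hcompl, hfut, hwht, hshdw⟩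
    have halt := alternates_of_mostFrequent hcompl hwht hshdw w.length le_rfl
    refine ⟨⟨even_length_of_alternates halt hfut, halt⟩,
      fun i hi he τ => ⟨hwht i hi τ, ?_⟩, fun i hi _ => hwht i hi⟩
    exact ((halt.mono hi.le).mostFrequent_shdw_iff_even (hwht i hi)).mpr he τ
  · rintro ⟨⟨hlen, halt⟩, heven, hodd⟩
    have hwht : ∀ i < w.length, ∀ τ, cnt w τ i ≤ cnt w wht i := fun i hi τ =>
      (Nat.even_or_odd i).elim (fun he => (heven i hi he τ).1) (fun ho => hodd i hi ho τ)
    refine ⟨(halt 0 (List.length_pos_iff.mpr hw)).1.mpr Even.zero,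
      halt.mem_wht_iff_notMem_shdw, fun j hj hwj => ?_, hwht, fun i hi => ?_⟩
    · have hj : Even j := (halt j hj).1.mp hwj
      have hj1 : j + 1 < w.length := by
        rw [Nat.even_iff] at hj hlen
        omega
      exact ⟨j + 1, j.le_succ, hj1, (halt _ hj1).2.mpr hj.add_one⟩
    · rw [(halt i hi).1, (halt.mono hi.le).mostFrequent_shdw_iff_even (hwht i hi)]

theorem ψMFLshadowy_defines_stronglyShadowy (wht shdw : ℕ) (hne : wht ≠ shdw)
    (w : Word) (hw : w ≠ []) :
    Sat w 0 (ψMFLshadowy wht shdw) ↔ StronglyShadowy wht shdw w :=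
  ψMFLshadowy_defines_stronglyShadowy_general wht shdw w hw

end MFL16
end

section
/- For every strongly shadowy word w, every even position 2i of w, and every letter σ ∈ AP: w,2i ⊨ Half σ if and only if w,2i ⊨ MFL σ (equivalently, |{j < 2i : σ ∈ w_j}| = i if and only if for all τ ∈ AP, |{j < 2i : σ ∈ w_j}| ≥ |{j < 2i : τ ∈ w_j}|). -/
/- STATEMENT 17: On strongly shadowy words, at even positions, Half σ and MFL σ are
equivalent. -/

namespace MFL17

abbrev Word := List (Set ℕ)

/-- Number of positions `j < i` of `w` whose label contains the letter `a`. -/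
noncomputable def cnt (w : Word) (a : ℕ) (i : ℕ) : ℕ :=
  Set.ncard {j | j < i ∧ a ∈ w.getD j ∅}

def Shadowy (wht shdw : ℕ) (w : Word) : Prop :=
  Even w.length ∧
  (∀ j < w.length, Even j → wht ∈ w.getD j ∅ ∧ shdw ∉ w.getD j ∅) ∧
  (∀ j < w.length, Odd j → shdw ∈ w.getD j ∅ ∧ wht ∉ w.getD j ∅)

def StronglyShadowy (wht shdw : ℕ) (w : Word) : Prop :=
  Shadowy wht shdw w ∧
  (∀ i < w.length, Even i → ∀ τ : ℕ, cnt w τ i ≤ cnt w wht i ∧ cnt w τ i ≤ cnt w shdw i) ∧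
  (∀ i < w.length, Odd i → ∀ τ : ℕ, cnt w τ i ≤ cnt w wht i)

lemma cnt_wht (wht shdw : ℕ) (w : Word) (hsh : Shadowy wht shdw w)
    (i : ℕ) (hi : 2 * i ≤ w.length) : cnt w wht (2 * i) = i := by
  have hset : {j | j < 2 * i ∧ wht ∈ w.getD j ∅} = (fun k => 2 * k) '' Set.Iio i := by
    ext j
    simp only [Set.mem_setOf_eq, Set.mem_image, Set.mem_Iio]
    constructor
    · rintro ⟨hj, hmem⟩
      rcases Nat.even_or_odd j with he | ho
      · obtain ⟨k, hk⟩ := he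
        exact ⟨k, by omega, by omega⟩
      · exact absurd hmem (hsh.2.2 j (by omega) ho).2
    · rintro ⟨k, hk, rfl⟩
      exact ⟨by omega, (hsh.2.1 (2 * k) (by omega) ⟨k, by ring⟩).1⟩
  rw [cnt, hset, Set.ncard_image_of_injective _ (fun a b h => by omega)]
  have : (Set.Iio i).ncard = i := by
    rw [Set.ncard_eq_toFinset_card']
    simp
  exact this

/-- On a strongly shadowy word, for every even position `2i` and every letter `σ`:
`w,2i ⊨ Half σ` (i.e. `|{j < 2i : σ ∈ w_j}| = i`) iff `w,2i ⊨ MFL σ`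
(i.e. `σ` is a most frequent letter in the past of `2i`). -/
theorem half_iff_mfl_on_stronglyShadowy (wht shdw : ℕ) (hne : wht ≠ shdw)
    (w : Word) (hw : StronglyShadowy wht shdw w)
    (i : ℕ) (hi : 2 * i < w.length) (σ : ℕ) :
    cnt w σ (2 * i) = i ↔ ∀ τ : ℕ, cnt w τ (2 * i) ≤ cnt w σ (2 * i) := by
  have hwht : cnt w wht (2 * i) = i := cnt_wht wht shdw w hw.1 i hi.le
  have hle : ∀ τ : ℕ, cnt w τ (2 * i) ≤ i := fun τ => by
    have := (hw.2.1 (2 * i) hi ⟨i, by ring⟩ τ).1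
    omega
  constructor
  · intro h τ; rw [h]; exact hle τ
  · intro h
    have h1 := h wht
    have h2 := hle σ
    omega

end MFL17
end

section
/- Let σ, σ̃ be distinct letters from AP \ {wht, shdw} and let p_φ ∈ AP be a letter occurring in no position of w. Suppose w is a strongly shadowy word such that only even (white) positions of w contain σ, only odd (shadow) positions contain σ̃, and for every even position p with p+1 < |w|: σ ∈ w_p iff σ̃ ∈ w_{p+1} (i.e., w satisfies φ_transfer^{σ,σ̃}). Let w' be the word obtained from w by adding p_φ to exactly those positions j that satisfy [wht ∈ w_j and σ ∈ w_j] or [shdw ∈ w_j and σ̃ ∉ w_j]. Then w' is strongly shadowy. -/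
/-! Letters other than `pφ` keep their positions, so only the counts of `pφ` need checking. On a
shadowy word the condition `[wht ∧ σ] ∨ [shdw ∧ ¬σ̃]` reads `σ` at a white position and `¬σ̃` at
a shadow position, so by `φ_transfer` exactly one position of each white–shadow pair `(2m, 2m+1)`
receives `pφ`, just as exactly one of them carries `wht` and one carries `shdw`. Hence before an
even position `2k` all three letters have been counted `k` times, and before `2k+1` the letter `pφ`
at most `k + 1 = cnt wht` times. -/

namespace MFL18

abbrev Word := List (Set ℕ)

noncomputable def cnt (w : Word) (a : ℕ) (i : ℕ) : ℕ :=
  Set.ncard {j | j < i ∧ a ∈ w.getD j ∅}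

def Shadowy (wht shdw : ℕ) (w : Word) : Prop :=
  Even w.length ∧
  (∀ j < w.length, Even j → wht ∈ w.getD j ∅ ∧ shdw ∉ w.getD j ∅) ∧
  (∀ j < w.length, Odd j → shdw ∈ w.getD j ∅ ∧ wht ∉ w.getD j ∅)

def StronglyShadowy (wht shdw : ℕ) (w : Word) : Prop :=
  Shadowy wht shdw w ∧
  (∀ i < w.length, Even i → ∀ τ : ℕ, cnt w τ i ≤ cnt w wht i ∧ cnt w τ i ≤ cnt w shdw i) ∧
  (∀ i < w.length, Odd i → ∀ τ : ℕ, cnt w τ i ≤ cnt w wht i)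

open Classical in
/-- The word obtained from `w` by adding `pφ` to exactly those positions whose label
satisfies `[wht ∧ σ] ∨ [shdw ∧ ¬σ̃]`. -/
noncomputable def addLetter (pφ wht shdw σ σt : ℕ) (w : Word) : Word :=
  w.map (fun s => if (wht ∈ s ∧ σ ∈ s) ∨ (shdw ∈ s ∧ σt ∉ s) then insert pφ s else s)

def OncePerPair (a : ℕ) (w : Word) : Prop :=
  ∀ m, 2 * m + 1 < w.length → (a ∈ w.getD (2 * m) ∅ ↔ a ∉ w.getD (2 * m + 1) ∅)

section cnt

variable {w v : Word} {a b : ℕ}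

open Classical in
theorem cnt_eq_card_filter (w : Word) (a i : ℕ) :
    cnt w a i = ((Finset.range i).filter (fun j => a ∈ w.getD j ∅)).card := by
  rw [cnt, ← Set.ncard_coe_finset]
  congr 1
  ext j
  simp

theorem cnt_zero (w : Word) (a : ℕ) : cnt w a 0 = 0 := by
  simp [cnt]

theorem cnt_succ_of_mem {i : ℕ} (h : a ∈ w.getD i ∅) : cnt w a (i + 1) = cnt w a i + 1 := by
  classical
  rw [cnt_eq_card_filter, cnt_eq_card_filter, Finset.range_add_one, Finset.filter_insert,
    if_pos h, Finset.card_insert_of_notMem (by simp)]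

theorem cnt_succ_of_notMem {i : ℕ} (h : a ∉ w.getD i ∅) : cnt w a (i + 1) = cnt w a i := by
  classical
  rw [cnt_eq_card_filter, cnt_eq_card_filter, Finset.range_add_one, Finset.filter_insert,
    if_neg h]

theorem cnt_succ_le (w : Word) (a i : ℕ) : cnt w a (i + 1) ≤ cnt w a i + 1 := by
  by_cases h : a ∈ w.getD i ∅
  · exact (cnt_succ_of_mem h).le
  · exact (cnt_succ_of_notMem h).trans_le (Nat.le_succ _)

theorem cnt_congr {i : ℕ} (h : ∀ j, a ∈ w.getD j ∅ ↔ b ∈ v.getD j ∅) :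
    cnt w a i = cnt v b i := by
  simp only [cnt, h]

theorem OncePerPair.cnt_two_mul (h : OncePerPair a w) {k : ℕ} (hk : 2 * k ≤ w.length) :
    cnt w a (2 * k) = k := by
  induction k with
  | zero => exact cnt_zero w a
  | succ k ih =>
    have hpair := h k (by omega)
    rw [show 2 * (k + 1) = 2 * k + 1 + 1 by ring]
    by_cases ha : a ∈ w.getD (2 * k) ∅
    · rw [cnt_succ_of_notMem (hpair.1 ha), cnt_succ_of_mem ha, ih (by omega)]
    · rw [cnt_succ_of_mem (not_not.1 (mt hpair.2 ha)), cnt_succ_of_notMem ha, ih (by omega)]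

end cnt

namespace Shadowy

variable {wht shdw : ℕ} {w : Word}

theorem oncePerPair_wht (hw : Shadowy wht shdw w) : OncePerPair wht w := fun m hm =>
  ⟨fun _ => (hw.2.2 _ hm (odd_two_mul_add_one m)).2,
    fun _ => (hw.2.1 _ (by omega) (even_two_mul m)).1⟩

theorem oncePerPair_shdw (hw : Shadowy wht shdw w) : OncePerPair shdw w := fun m hm =>
  ⟨fun h => absurd h (hw.2.1 _ (by omega) (even_two_mul m)).2,
    fun h => absurd (hw.2.2 _ hm (odd_two_mul_add_one m)).1 h⟩

theorem ne_wht_of_notMem {p : ℕ} (hw : Shadowy wht shdw w) (hpos : 0 < w.length)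
    (hp : ∀ j, p ∉ w.getD j ∅) : p ≠ wht := by
  rintro rfl
  exact hp 0 (hw.2.1 0 hpos Even.zero).1

theorem ne_shdw_of_notMem {p : ℕ} (hw : Shadowy wht shdw w) (hpos : 0 < w.length)
    (hp : ∀ j, p ∉ w.getD j ∅) : p ≠ shdw := by
  have h2 : 2 ≤ w.length := by obtain ⟨n, hn⟩ := hw.1; omega
  rintro rfl
  exact hp 1 (hw.2.2 1 (by omega) odd_one).1

end Shadowy

theorem StronglyShadowy.of_oncePerPair {wht shdw p : ℕ} {w v : Word}
    (hw : StronglyShadowy wht shdw w) (hlen : v.length = w.length)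
    (hfresh : ∀ j, p ∉ w.getD j ∅) (hagree : ∀ a ≠ p, ∀ j, a ∈ v.getD j ∅ ↔ a ∈ w.getD j ∅)
    (hp : OncePerPair p v) : StronglyShadowy wht shdw v := by
  obtain ⟨hsh, hcntE, hcntO⟩ := hw
  rcases Nat.eq_zero_or_pos w.length with hnil | hpos
  · have hv : v = [] := List.eq_nil_of_length_eq_zero (hlen.trans hnil)
    subst hv
    simp [StronglyShadowy, Shadowy]
  have hpw := hsh.ne_wht_of_notMem hpos hfresh
  have hps := hsh.ne_shdw_of_notMem hpos hfresh
  have hcnt : ∀ a ≠ p, ∀ i, cnt v a i = cnt w a i := fun a ha i =>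
    cnt_congr (hagree a ha)
  simp only [StronglyShadowy, Shadowy, hlen, hagree wht hpw.symm, hagree shdw hps.symm,
    hcnt wht hpw.symm, hcnt shdw hps.symm]
  refine ⟨hsh, fun i hi hiE τ => ?_, fun i hi hiO τ => ?_⟩
  · rcases eq_or_ne τ p with rfl | hτ
    · obtain ⟨k, rfl⟩ := hiE
      rw [← two_mul, hp.cnt_two_mul (by omega), hsh.oncePerPair_wht.cnt_two_mul (by omega),
        hsh.oncePerPair_shdw.cnt_two_mul (by omega)]
      exact ⟨le_rfl, le_rfl⟩
    · rw [hcnt τ hτ]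
      exact hcntE i hi hiE τ
  · rcases eq_or_ne τ p with rfl | hτ
    · obtain ⟨k, rfl⟩ := hiO
      calc cnt v τ (2 * k + 1) ≤ cnt v τ (2 * k) + 1 := cnt_succ_le v τ _
        _ = cnt w wht (2 * k) + 1 := by
          rw [hp.cnt_two_mul (by omega), hsh.oncePerPair_wht.cnt_two_mul (by omega)]
        _ = cnt w wht (2 * k + 1) :=
          (cnt_succ_of_mem (hsh.2.1 _ (by omega) (even_two_mul k)).1).symm
    · rw [hcnt τ hτ]
      exact hcntO i hi hiO τ

section addLetter

variable {pφ wht shdw σ σt : ℕ} {w : Word}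

theorem mem_getD_addLetter {a j : ℕ} :
    a ∈ (addLetter pφ wht shdw σ σt w).getD j ∅ ↔ a ∈ w.getD j ∅ ∨
      a = pφ ∧ ((wht ∈ w.getD j ∅ ∧ σ ∈ w.getD j ∅) ∨ (shdw ∈ w.getD j ∅ ∧ σt ∉ w.getD j ∅)) := by
  classical
  have h := List.getD_map w ∅ (n := j)
    (fun s => if (wht ∈ s ∧ σ ∈ s) ∨ (shdw ∈ s ∧ σt ∉ s) then insert pφ s else s)
  simp only [Set.mem_empty_iff_false, false_and, or_self, if_false] at h
  rw [addLetter, h]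
  split_ifs
  · rw [Set.mem_insert_iff]; tauto
  · tauto

end addLetter

theorem addLetter_stronglyShadowy_general
    (wht shdw σ σt pφ : ℕ)
    (w : Word)
    (hfresh : ∀ s ∈ w, pφ ∉ s)
    (hstrong : StronglyShadowy wht shdw w)
    (htransfer : ∀ p, Even p → p + 1 < w.length →
        (σ ∈ w.getD p ∅ ↔ σt ∈ w.getD (p + 1) ∅)) :
    StronglyShadowy wht shdw (addLetter pφ wht shdw σ σt w) := by
  have hnot : ∀ j, pφ ∉ w.getD j ∅ := by
    intro j
    rcases lt_or_ge j w.length with hj | hj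
    · rw [List.getD_eq_getElem _ _ hj]
      exact hfresh _ (List.getElem_mem hj)
    · rw [List.getD_eq_default _ _ hj]
      exact Set.notMem_empty pφ
  refine hstrong.of_oncePerPair (by simp [addLetter]) hnot
    (fun a ha j => by simp only [mem_getD_addLetter, ha, false_and, or_false]) fun m hm => ?_
  have hm : 2 * m + 1 < w.length := by simpa [addLetter] using hm
  obtain ⟨hwE, hsE⟩ := hstrong.1.2.1 (2 * m) (by omega) (even_two_mul m)
  obtain ⟨hsO, hwO⟩ := hstrong.1.2.2 _ hm (odd_two_mul_add_one m)
  simp only [mem_getD_addLetter, hnot, hwE, hsE, hsO, hwO, htransfer _ (even_two_mul m) hm]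
  tauto

theorem addLetter_stronglyShadowy
    (wht shdw σ σt pφ : ℕ)
    (hws : wht ≠ shdw) (hσσt : σ ≠ σt)
    (hσw : σ ≠ wht) (hσs : σ ≠ shdw) (hσtw : σt ≠ wht) (hσts : σt ≠ shdw)
    (w : Word)
    (hfresh : ∀ s ∈ w, pφ ∉ s)
    (hstrong : StronglyShadowy wht shdw w)
    (honlyσ : ∀ j < w.length, σ ∈ w.getD j ∅ → Even j)
    (honlyσt : ∀ j < w.length, σt ∈ w.getD j ∅ → Odd j)
    (htransfer : ∀ p, Even p → p + 1 < w.length →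
        (σ ∈ w.getD p ∅ ↔ σt ∈ w.getD (p + 1) ∅)) :
    StronglyShadowy wht shdw (addLetter pφ wht shdw σ σt w) :=
  addLetter_stronglyShadowy_general wht shdw σ σt pφ w hfresh hstrong htransfer

end MFL18
end
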